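/- arXiv:2503.10591 — 2 statements merged into one kernel-verified Lean document; each statement's English description precedes it below -/
import Mathlib

section
/- Under a completely randomized assignment, for every treatment j ∈ {1,…,J} the variance of the observed group mean is Var(p_j) = ((N − N_j)/N) · (S_j² / N_j). -/
/-!
Put `e i = Y i j - P_j`, so that `∑ e = 0`, and let `I i` be the indicator of `T i = j`; then
`p_j - P_j = (∑ i, I i * e i) / N_j` on every assignment. The uniform law on assignments is
invariant under permutations of the units, so `E[I i] = N_j / N`, and since
`∑ k, I i * I k = N_j * I i` the off-diagonal moments are
`E[I i * I k] = N_j (N_j - 1) / (N (N - 1))`.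
Expanding the square, `∑ e = 0` kills the constant part of the second-moment matrix and leaves
`(E[I i] - E[I i * I k]) * ∑ e² = N_j (N - N_j) / N * S_j²`.
-/

open Finset

/-- The finset of completely randomized assignments of `N` units to treatments in `J`
with group sizes `Nj`. -/
def assignments (N : ℕ) {J : Type*} [Fintype J] [DecidableEq J] (Nj : J → ℕ) :
    Finset (Fin N → J) :=
  Finset.univ.filter fun T => ∀ j, (Finset.univ.filter fun i => T i = j).card = Nj j

/-- Expectation with respect to the uniform distribution on completely randomized
assignments. -/
noncomputable def expect {N : ℕ} {J : Type*} [Fintype J] [DecidableEq J]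
    (Nj : J → ℕ) (f : (Fin N → J) → ℝ) : ℝ :=
  (∑ T ∈ assignments N Nj, f T) / ((assignments N Nj).card : ℝ)

/-- Variance with respect to the randomization distribution. -/
noncomputable def rvar {N : ℕ} {J : Type*} [Fintype J] [DecidableEq J]
    (Nj : J → ℕ) (f : (Fin N → J) → ℝ) : ℝ :=
  expect Nj fun T => (f T - expect Nj f) ^ 2

/-- Covariance with respect to the randomization distribution. -/
noncomputable def rcov {N : ℕ} {J : Type*} [Fintype J] [DecidableEq J]
    (Nj : J → ℕ) (f g : (Fin N → J) → ℝ) : ℝ :=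
  expect Nj fun T => (f T - expect Nj f) * (g T - expect Nj g)

/-- Observed group mean `p_j` of treatment `j` under assignment `T`. -/
noncomputable def pObs {N : ℕ} {J : Type*} [DecidableEq J]
    (Y : Fin N → J → ℝ) (Nj : J → ℕ) (j : J) (T : Fin N → J) : ℝ :=
  (∑ i ∈ Finset.univ.filter fun i => T i = j, Y i j) / (Nj j : ℝ)

/-- Population mean `P_j`. -/
noncomputable def Pmean {N : ℕ} {J : Type*} (Y : Fin N → J → ℝ) (j : J) : ℝ :=
  (∑ i, Y i j) / (N : ℝ)

/-- Population variance `S_j²`. -/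
noncomputable def S2 {N : ℕ} {J : Type*} (Y : Fin N → J → ℝ) (j : J) : ℝ :=
  (∑ i, (Y i j - Pmean Y j) ^ 2) / ((N : ℝ) - 1)

/-- Variance of unit-level differences `S²_{j-j'}`. -/
noncomputable def S2diff {N : ℕ} {J : Type*} (Y : Fin N → J → ℝ) (j j' : J) : ℝ :=
  (∑ i, (Y i j - Y i j' - (Pmean Y j - Pmean Y j')) ^ 2) / ((N : ℝ) - 1)

open scoped BigOperators

theorem Finset.sum_sum_mul_ite_of_sum_eq_zero {ι R : Type*} [Fintype ι] [DecidableEq ι]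
    [CommRing R] {e : ι → R} (he : ∑ i, e i = 0) (a b : R) :
    ∑ i, ∑ k, e i * e k * (if i = k then a else b) = (a - b) * ∑ i, e i ^ 2 := by
  have hsplit : ∀ i k, e i * e k * (if i = k then a else b)
      = b * (e i * e k) + (if i = k then (a - b) * e i ^ 2 else 0) := fun i k => by
    split_ifs with h
    · subst h; ring
    · ring
  simp only [hsplit, sum_add_distrib, ← mul_sum, sum_ite_eq, mem_univ, if_true, he, mul_zero,
    zero_add]

namespace CompleteRandomization

section Indicator

variable {N : ℕ} {J : Type*} [DecidableEq J]

noncomputable def treatInd (j : J) (i : Fin N) (T : Fin N → J) : ℝ := if T i = j then 1 else 0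

theorem treatInd_comp (j : J) (i : Fin N) (T : Fin N → J) (σ : Equiv.Perm (Fin N)) :
    treatInd j i (T ∘ σ) = treatInd j (σ i) T :=
  rfl

theorem treatInd_mul_self (j : J) (i : Fin N) (T : Fin N → J) :
    treatInd j i T * treatInd j i T = treatInd j i T := by
  unfold treatInd; split_ifs <;> norm_num

theorem pObs_eq_sum_treatInd_mul (Y : Fin N → J → ℝ) (Nj : J → ℕ) (j : J) (T : Fin N → J) :
    pObs Y Nj j T = (∑ i, treatInd j i T * Y i j) / Nj j := by
  simp only [pObs, treatInd, sum_filter, ite_mul, one_mul, zero_mul]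

end Indicator

theorem sum_sub_Pmean {N : ℕ} {J : Type*} (Y : Fin N → J → ℝ) (j : J) :
    ∑ i, (Y i j - Pmean Y j) = 0 := by
  rcases N.eq_zero_or_pos with rfl | hN
  · simp
  · rw [sum_sub_distrib, sum_const, card_univ, Fintype.card_fin, nsmul_eq_mul, Pmean,
      mul_div_cancel₀ _ (by positivity), sub_self]

variable {N : ℕ} {J : Type*} [Fintype J] [DecidableEq J] {Nj : J → ℕ}

theorem assignments_nonempty (hsum : ∑ j, Nj j = N) : (assignments N Nj).Nonempty := by
  obtain e : Fin N ≃ Σ j, Fin (Nj j) := Fintype.equivOfCardEq (by simp [hsum])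
  refine ⟨fun i => (e i).1, mem_filter.2 ⟨mem_univ _, fun j => ?_⟩⟩
  rw [← Fintype.card_subtype, ← Fintype.card_fin (Nj j)]
  exact Fintype.card_congr ((e.subtypeEquiv fun _ => Iff.rfl).trans (Equiv.sigmaSubtype j))

theorem comp_perm_mem_assignments (σ : Equiv.Perm (Fin N)) {T : Fin N → J}
    (hT : T ∈ assignments N Nj) : T ∘ σ ∈ assignments N Nj := by
  refine mem_filter.2 ⟨mem_univ _, fun j => ?_⟩
  rw [← (mem_filter.1 hT).2 j]
  exact card_bij (fun i _ => σ i) (by simp) (by simp) fun i hi => ⟨σ.symm i, by simpa using hi⟩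

theorem expect_assignments_comp_perm (σ : Equiv.Perm (Fin N)) (f : (Fin N → J) → ℝ) :
    𝔼 T ∈ assignments N Nj, f (T ∘ σ) = 𝔼 T ∈ assignments N Nj, f T :=
  expect_nbij' (· ∘ σ) (· ∘ σ.symm) (fun _ => comp_perm_mem_assignments σ)
    (fun _ => comp_perm_mem_assignments σ.symm) (fun T _ => by ext; simp)
    (fun T _ => by ext; simp) fun _ _ => rfl

theorem rvar_eq_of_eq_add_div (hA : (assignments N Nj).Nonempty)
    {f X : (Fin N → J) → ℝ} {c d : ℝ} (hf : ∀ T ∈ assignments N Nj, f T = c + X T / d)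
    (hX : 𝔼 T ∈ assignments N Nj, X T = 0) :
    rvar Nj f = (𝔼 T ∈ assignments N Nj, X T ^ 2) / d ^ 2 := by
  have hEf : _root_.expect Nj f = c := by
    rw [_root_.expect, ← expect_eq_sum_div_card, expect_congr rfl hf, expect_add_distrib,
      Finset.expect_const hA, ← expect_div, hX, zero_div, add_zero]
  rw [rvar, hEf, _root_.expect, ← expect_eq_sum_div_card, expect_div]
  exact expect_congr rfl fun T hT => by rw [hf T hT]; ring

theorem sum_treatInd {T : Fin N → J} (hT : T ∈ assignments N Nj) (j : J) :
    ∑ i, treatInd j i T = Nj j := by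
  simp only [treatInd, sum_boole, (mem_filter.1 hT).2 j]

theorem pObs_eq_Pmean_add {Y : Fin N → J → ℝ} {j : J} (hn : (Nj j : ℝ) ≠ 0)
    {T : Fin N → J} (hT : T ∈ assignments N Nj) :
    pObs Y Nj j T = Pmean Y j + (∑ i, treatInd j i T * (Y i j - Pmean Y j)) / Nj j := by
  simp only [pObs_eq_sum_treatInd_mul, mul_sub, sum_sub_distrib, ← sum_mul, sum_treatInd hT]
  field_simp
  ring

theorem expect_treatInd (hA : (assignments N Nj).Nonempty) (j : J) (i : Fin N) :
    𝔼 T ∈ assignments N Nj, treatInd j i T = Nj j / N := by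
  have hsym : ∀ k, 𝔼 T ∈ assignments N Nj, treatInd j k T
      = 𝔼 T ∈ assignments N Nj, treatInd j i T := fun k => by
    rw [← expect_assignments_comp_perm (Equiv.swap i k) (treatInd j i)]
    simp only [treatInd_comp, Equiv.swap_apply_left]
  rw [eq_div_iff (by exact_mod_cast i.pos.ne')]
  calc (𝔼 T ∈ assignments N Nj, treatInd j i T) * N
      = ∑ k, 𝔼 T ∈ assignments N Nj, treatInd j k T := by simp [hsym, mul_comm]
    _ = Nj j := by
      rw [← expect_sum_comm, expect_congr rfl fun T hT => sum_treatInd hT j, Finset.expect_const hA]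

theorem expect_treatInd_mul_of_ne (hA : (assignments N Nj).Nonempty) (j : J) {i k : Fin N}
    (hik : i ≠ k) :
    𝔼 T ∈ assignments N Nj, treatInd j i T * treatInd j k T
      = Nj j * (Nj j - 1) / (N * (N - 1)) := by
  have hsym : ∀ k' ∈ univ.erase i, 𝔼 T ∈ assignments N Nj, treatInd j i T * treatInd j k' T
      = 𝔼 T ∈ assignments N Nj, treatInd j i T * treatInd j k T := fun k' hk' => by
    rw [← expect_assignments_comp_perm (Equiv.swap k k')
      (fun T => treatInd j i T * treatInd j k T)]
    simp only [treatInd_comp, Equiv.swap_apply_left,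
      Equiv.swap_apply_of_ne_of_ne hik (ne_of_mem_erase hk').symm]
  have hrow : ∑ k', 𝔼 T ∈ assignments N Nj, treatInd j i T * treatInd j k' T
      = Nj j * (Nj j / N) := by
    rw [← expect_sum_comm, expect_congr rfl fun T hT => by rw [← mul_sum, sum_treatInd hT j],
      ← expect_mul, expect_treatInd hA, mul_comm]
  -- the row is the diagonal moment `E[I i] = N_j / N` plus `N - 1` equal off-diagonal ones
  rw [← add_sum_erase _ _ (mem_univ i), sum_congr rfl hsym, sum_const, card_erase_of_mem
    (mem_univ i), card_univ, Fintype.card_fin, nsmul_eq_mul,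
    expect_congr rfl fun T _ => treatInd_mul_self j i T, expect_treatInd hA] at hrow
  have hN : 1 < N := by simpa using Fintype.one_lt_card_iff.2 ⟨i, k, hik⟩
  rw [Nat.cast_pred (by omega)] at hrow
  have hN0 : (N : ℝ) ≠ 0 := by positivity
  have hN1 : (N : ℝ) - 1 ≠ 0 := sub_ne_zero.2 (by exact_mod_cast hN.ne')
  rw [eq_div_iff (mul_ne_zero hN0 hN1)]
  field_simp at hrow
  linear_combination hrow

theorem expect_treatInd_mul (hA : (assignments N Nj).Nonempty) (j : J) (i k : Fin N) :
    𝔼 T ∈ assignments N Nj, treatInd j i T * treatInd j k T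
      = if i = k then (Nj j / N : ℝ) else Nj j * (Nj j - 1) / (N * (N - 1)) := by
  split_ifs with hik
  · subst hik
    simp only [treatInd_mul_self, expect_treatInd hA]
  · exact expect_treatInd_mul_of_ne hA j hik

theorem expect_sum_treatInd_mul (hA : (assignments N Nj).Nonempty) (j : J) (e : Fin N → ℝ) :
    𝔼 T ∈ assignments N Nj, ∑ i, treatInd j i T * e i = Nj j / N * ∑ i, e i := by
  simp only [expect_sum_comm, ← expect_mul, expect_treatInd hA, mul_sum]

theorem expect_sq_sum_treatInd_mul (hA : (assignments N Nj).Nonempty) (j : J) {e : Fin N → ℝ}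
    (he : ∑ i, e i = 0) :
    𝔼 T ∈ assignments N Nj, (∑ i, treatInd j i T * e i) ^ 2
      = (Nj j / N - Nj j * (Nj j - 1) / (N * (N - 1))) * ∑ i, e i ^ 2 := by
  have hsq : ∀ T, (∑ i, treatInd j i T * e i) ^ 2
      = ∑ i, ∑ k, e i * e k * (treatInd j i T * treatInd j k T) := fun T => by
    rw [sq, sum_mul_sum]
    exact sum_congr rfl fun i _ => sum_congr rfl fun k _ => by ring
  simp only [hsq, expect_sum_comm, ← mul_expect, expect_treatInd_mul hA]
  exact sum_sum_mul_ite_of_sum_eq_zero he _ _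

end CompleteRandomization

open CompleteRandomization in
/-- Under a completely randomized assignment, for every treatment `j` the variance of the
observed group mean is `Var(p_j) = ((N - N_j)/N) * (S_j² / N_j)`. -/
theorem rvar_pObs {N J : ℕ} (hN : 2 ≤ N)
    (Y : Fin N → Fin J → ℝ) (Nj : Fin J → ℕ)
    (hpos : ∀ j, 1 ≤ Nj j) (hsum : ∑ j, Nj j = N) :
    ∀ j, rvar Nj (pObs Y Nj j) =
      (((N : ℝ) - (Nj j : ℝ)) / (N : ℝ)) * (S2 Y j / (Nj j : ℝ)) := by
  intro j
  have hA := assignments_nonempty hsum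
  have hn : (Nj j : ℝ) ≠ 0 := by exact_mod_cast Nat.one_le_iff_ne_zero.1 (hpos j)
  have hN0 : (N : ℝ) ≠ 0 := by positivity
  have hN1 : (N : ℝ) - 1 ≠ 0 := sub_ne_zero.2 (by exact_mod_cast (by omega : N ≠ 1))
  rw [rvar_eq_of_eq_add_div hA (fun T hT => pObs_eq_Pmean_add hn hT)
      (by rw [expect_sum_treatInd_mul hA, sum_sub_Pmean, mul_zero]),
    expect_sq_sum_treatInd_mul hA j (sum_sub_Pmean Y j), S2]
  field_simp
  ring
end

section
/- Under a completely randomized assignment, for any two distinct treatments j ≠ j' in {1,…,J}, the covariance of the observed group means is Cov(p_j, p_{j'}) = −(1/(2N)) (S_j² + S_{j'}² − S²_{j−j'}). -/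
open Finset

/-!
Relabelling the units by a permutation maps the set of assignments to itself, so the number
of assignments with `T i = j` does not depend on `i`, and for `j ≠ j'` the number with
`T i = j ∧ T k = j'` does not depend on the pair `i ≠ k`. Double counting over units then gives
the inclusion probabilities `N_j / N` and `N_j N_{j'} / (N (N - 1))`, hence `E p_j = P_j` and
`N (N - 1) E[p_j p_{j'}] = (∑ Y(j)) (∑ Y(j')) - ∑ Y(j) Y(j')`. The claim follows from
`Cov = E[p_j p_{j'}] - E p_j E p_{j'}` and the polarization identity
`S_j² + S_{j'}² - S²_{j-j'} = 2 / (N - 1) ∑ (Y_i(j) - P_j) (Y_i(j') - P_{j'})`.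
-/

open scoped BigOperators

lemma sum_sum_ite_eq_zero_mul {ι R : Type*} [Fintype ι] [DecidableEq ι] [CommRing R]
    (f g : ι → R) :
    ∑ i, ∑ k, (if i = k then 0 else f i * g k) =
      (∑ i, f i) * ∑ i, g i - ∑ i, f i * g i := by
  have hsplit : ∀ i k,
      (if i = k then 0 else f i * g k) = f i * g k - if i = k then f i * g k else 0 :=
    fun i k => by split_ifs <;> simp
  simp_rw [hsplit, sum_sub_distrib, sum_ite_eq, if_pos (mem_univ _), ← mul_sum, ← sum_mul]

lemma pObs_eq_sum_indicator_mul {N : ℕ} {κ : Type*} [DecidableEq κ] {Nj : κ → ℕ}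
    (Y : Fin N → κ → ℝ) (j : κ) (T : Fin N → κ) :
    pObs Y Nj j T = ∑ i, (if T i = j then (1 : ℝ) else 0) * (Y i j / Nj j) := by
  simp [pObs, sum_filter, sum_div, ite_div]

section Randomization

variable {N : ℕ} {κ : Type*} [Fintype κ] [DecidableEq κ] {Nj : κ → ℕ}

lemma assignments_nonempty (hsum : ∑ j, Nj j = N) : (assignments N Nj).Nonempty := by
  let e : (Σ j, Fin (Nj j)) ≃ Fin N := Fintype.equivFinOfCardEq (by simp [hsum])
  refine ⟨fun i => (e.symm i).1, mem_filter.2 ⟨mem_univ _, fun j => ?_⟩⟩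
  calc #{i | (e.symm i).1 = j}
      = #(({j} : Finset κ).sigma fun j => (univ : Finset (Fin (Nj j)))) :=
        card_equiv e.symm fun i => by simp
    _ = Nj j := by simp

lemma comp_perm_mem_assignments {T : Fin N → κ} (hT : T ∈ assignments N Nj)
    (σ : Equiv.Perm (Fin N)) : T ∘ σ ∈ assignments N Nj := by
  simp only [assignments, mem_filter, mem_univ, true_and] at hT ⊢
  exact fun j => (card_equiv σ fun i => by simp).trans (hT j)

lemma card_filter_comp_perm (σ : Equiv.Perm (Fin N)) (p : (Fin N → κ) → Prop)
    [DecidablePred p] :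
    #{T ∈ assignments N Nj | p (T ∘ σ)} = #{T ∈ assignments N Nj | p T} := by
  refine card_nbij' (· ∘ σ) (· ∘ σ.symm) ?_ ?_ ?_ ?_
  · intro T hT
    simp only [coe_filter, Set.mem_ofPred_eq] at hT ⊢
    exact ⟨comp_perm_mem_assignments hT.1 σ, hT.2⟩
  · intro T hT
    simp only [coe_filter, Set.mem_ofPred_eq] at hT ⊢
    refine ⟨comp_perm_mem_assignments hT.1 σ.symm, ?_⟩
    simpa [Function.comp_def] using hT.2
  · intro T _; ext i; simp
  · intro T _; ext i; simp

lemma sum_card_filter_apply_eq {s : Finset (Fin N → κ)} (hs : s ⊆ assignments N Nj) (j : κ) :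
    ∑ i, #{T ∈ s | T i = j} = #s * Nj j := by
  have hfiber : ∀ T ∈ s, #{i | T i = j} = Nj j := fun T hT =>
    (mem_filter.1 (hs hT)).2 j
  rw [← sum_const_nat hfiber]
  exact sum_card_bipartiteAbove_eq_sum_card_bipartiteBelow
    (r := fun (i : Fin N) (T : Fin N → κ) => T i = j)

lemma card_filter_apply_eq_congr (i k : Fin N) (j : κ) :
    #{T ∈ assignments N Nj | T i = j} = #{T ∈ assignments N Nj | T k = j} := by
  simpa using (card_filter_comp_perm (Nj := Nj) (Equiv.swap i k) (fun T => T i = j)).symm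

lemma card_filter_apply_eq_and_apply_eq_congr {i k k' : Fin N} (hk : i ≠ k) (hk' : i ≠ k')
    (j j' : κ) :
    #{T ∈ assignments N Nj | T i = j ∧ T k = j'} =
      #{T ∈ assignments N Nj | T i = j ∧ T k' = j'} := by
  simpa [Equiv.swap_apply_of_ne_of_ne hk hk'] using
    (card_filter_comp_perm (Nj := Nj) (Equiv.swap k k') (fun T => T i = j ∧ T k = j')).symm

lemma card_mul_card_filter_apply_eq (i : Fin N) (j : κ) :
    N * #{T ∈ assignments N Nj | T i = j} = #(assignments N Nj) * Nj j := by
  rw [← sum_card_filter_apply_eq subset_rfl j]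
  simp [card_filter_apply_eq_congr _ i]

lemma sub_one_mul_card_filter_apply_eq_and_apply_eq {i k : Fin N} (hik : i ≠ k) {j j' : κ}
    (hjj : j ≠ j') :
    (N - 1) * #{T ∈ assignments N Nj | T i = j ∧ T k = j'} =
      #{T ∈ assignments N Nj | T i = j} * Nj j' := by
  have hdiag : #{T ∈ assignments N Nj | T i = j ∧ T i = j'} = 0 :=
    card_eq_zero.2 <| filter_eq_empty_iff.2 fun _ _ h => hjj (h.1.symm.trans h.2)
  rw [← sum_card_filter_apply_eq (filter_subset _ _) j', ← add_sum_erase _ _ (mem_univ i)]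
  simp_rw [filter_filter]
  rw [hdiag, zero_add, sum_congr rfl fun k' hk' =>
    (card_filter_apply_eq_and_apply_eq_congr hik (ne_of_mem_erase hk').symm j j').symm]
  simp

lemma expect_eq_finsetExpect (f : (Fin N → κ) → ℝ) :
    _root_.expect Nj f = 𝔼 T ∈ assignments N Nj, f T :=
  (expect_eq_sum_div_card _ _).symm

lemma rcov_eq_expect_mul_sub (hA : (assignments N Nj).Nonempty) (f g : (Fin N → κ) → ℝ) :
    rcov Nj f g =
      _root_.expect Nj (fun T => f T * g T) - _root_.expect Nj f * _root_.expect Nj g := by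
  simp only [rcov, expect_eq_finsetExpect]
  set a := 𝔼 T ∈ assignments N Nj, f T
  set b := 𝔼 T ∈ assignments N Nj, g T
  have hexpand : ∀ T, (f T - a) * (g T - b) = f T * g T - (a * g T + (b * f T - a * b)) :=
    fun T => by ring
  simp only [hexpand, expect_sub_distrib, expect_add_distrib, ← mul_expect, expect_const hA]
  ring

lemma expect_indicator_apply_eq (hA : (assignments N Nj).Nonempty) (i : Fin N) (j : κ) :
    𝔼 T ∈ assignments N Nj, (if T i = j then (1 : ℝ) else 0) = Nj j / N := by
  have hN : (N : ℝ) ≠ 0 := Nat.cast_ne_zero.2 i.pos.ne'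
  have hA' : (#(assignments N Nj) : ℝ) ≠ 0 := Nat.cast_ne_zero.2 hA.card_pos.ne'
  rw [expect_eq_sum_div_card, sum_boole, div_eq_div_iff hA' hN, mul_comm (Nj j : ℝ)]
  exact_mod_cast (mul_comm _ _).trans (card_mul_card_filter_apply_eq (Nj := Nj) i j)

lemma mul_expect_indicator_mul_indicator (hA : (assignments N Nj).Nonempty) (i k : Fin N)
    {j j' : κ} (hjj : j ≠ j') :
    N * (N - 1) * 𝔼 T ∈ assignments N Nj,
        (if T i = j then (1 : ℝ) else 0) * (if T k = j' then 1 else 0) =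
      if i = k then 0 else (Nj j * Nj j' : ℝ) := by
  simp only [boole_mul, ← ite_and]
  split_ifs with hik
  · subst hik
    simp [fun T : Fin N → κ => show ¬(T i = j ∧ T i = j') from
      fun h => hjj (h.1.symm.trans h.2)]
  have hcount : N * (N - 1) * #{T ∈ assignments N Nj | T i = j ∧ T k = j'} =
      #(assignments N Nj) * Nj j * Nj j' := by
    rw [mul_assoc, sub_one_mul_card_filter_apply_eq_and_apply_eq hik hjj, ← mul_assoc,
      card_mul_card_filter_apply_eq]
  have hA' : (#(assignments N Nj) : ℝ) ≠ 0 := Nat.cast_ne_zero.2 hA.card_pos.ne'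
  rw [expect_eq_sum_div_card, sum_boole, mul_div_assoc', div_eq_iff hA', ← Nat.cast_pred i.pos]
  exact_mod_cast hcount.trans (by ring)

lemma expect_pObs (hA : (assignments N Nj).Nonempty) (Y : Fin N → κ → ℝ) {j : κ}
    (hj : Nj j ≠ 0) : _root_.expect Nj (pObs Y Nj j) = Pmean Y j := by
  simp_rw [expect_eq_finsetExpect, pObs_eq_sum_indicator_mul, expect_sum_comm, ← expect_mul,
    expect_indicator_apply_eq hA, Pmean, sum_div]
  refine sum_congr rfl fun i _ => ?_
  have : (N : ℝ) ≠ 0 := Nat.cast_ne_zero.2 i.pos.ne'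
  field_simp

lemma mul_expect_pObs_mul_pObs (hA : (assignments N Nj).Nonempty) (Y : Fin N → κ → ℝ)
    {j j' : κ} (hjj : j ≠ j') (hj : Nj j ≠ 0) (hj' : Nj j' ≠ 0) :
    N * (N - 1) * _root_.expect Nj (fun T => pObs Y Nj j T * pObs Y Nj j' T) =
      (∑ i, Y i j) * (∑ i, Y i j') - ∑ i, Y i j * Y i j' := by
  rw [← sum_sum_ite_eq_zero_mul, expect_eq_finsetExpect]
  simp_rw [pObs_eq_sum_indicator_mul, sum_mul_sum, expect_sum_comm,
    mul_mul_mul_comm _ (Y _ j / _), ← expect_mul, mul_sum, ← mul_assoc,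
    mul_expect_indicator_mul_indicator hA _ _ hjj]
  refine sum_congr rfl fun i _ => sum_congr rfl fun k _ => ?_
  split_ifs
  · simp
  · field_simp

end Randomization

section PopulationMoments

variable {N : ℕ} {κ : Type*}

lemma natCast_mul_Pmean (Y : Fin N → κ → ℝ) (j : κ) : N * Pmean Y j = ∑ i, Y i j := by
  rcases N.eq_zero_or_pos with rfl | hN
  · simp
  · exact mul_div_cancel₀ _ (by positivity)

lemma sum_sub_Pmean_mul_sub_Pmean (Y : Fin N → κ → ℝ) (j j' : κ) :
    ∑ i, (Y i j - Pmean Y j) * (Y i j' - Pmean Y j') =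
      ∑ i, Y i j * Y i j' - N * Pmean Y j * Pmean Y j' := by
  simp only [sub_mul, mul_sub, sum_sub_distrib, ← mul_sum, ← sum_mul, sum_const, card_univ,
    Fintype.card_fin, nsmul_eq_mul, ← natCast_mul_Pmean]
  ring

lemma S2_add_S2_sub_S2diff (Y : Fin N → κ → ℝ) (j j' : κ) :
    S2 Y j + S2 Y j' - S2diff Y j j' =
      2 * (∑ i, (Y i j - Pmean Y j) * (Y i j' - Pmean Y j')) / (N - 1) := by
  rw [S2, S2, S2diff, ← add_div, ← sub_div, ← sum_add_distrib, ← sum_sub_distrib, mul_sum]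
  congr 1
  exact sum_congr rfl fun i _ => by ring

end PopulationMoments

/-- Under a completely randomized assignment, for distinct treatments `j ≠ j'`,
`Cov(p_j, p_{j'}) = -(1/(2N)) (S_j² + S_{j'}² - S²_{j-j'})`. -/
theorem rcov_pObs {N J : ℕ} (hN : 2 ≤ N)
    (Y : Fin N → Fin J → ℝ) (Nj : Fin J → ℕ)
    (hpos : ∀ j, 1 ≤ Nj j) (hsum : ∑ j, Nj j = N) :
    ∀ j j' : Fin J, j ≠ j' →
      rcov Nj (pObs Y Nj j) (pObs Y Nj j') =
        -(1 / (2 * (N : ℝ))) * (S2 Y j + S2 Y j' - S2diff Y j j') := by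
  intro j j' hjj
  have hA := assignments_nonempty hsum
  have hj : Nj j ≠ 0 := Nat.one_le_iff_ne_zero.1 (hpos j)
  have hj' : Nj j' ≠ 0 := Nat.one_le_iff_ne_zero.1 (hpos j')
  have hN' : (2 : ℝ) ≤ N := by exact_mod_cast hN
  have hN0 : (N : ℝ) ≠ 0 := by positivity
  have hN1 : (N : ℝ) - 1 ≠ 0 := by linarith
  have hprod := mul_expect_pObs_mul_pObs hA Y hjj hj hj'
  rw [← natCast_mul_Pmean, ← natCast_mul_Pmean] at hprod
  rw [rcov_eq_expect_mul_sub hA, expect_pObs hA Y hj, expect_pObs hA Y hj',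
    S2_add_S2_sub_S2diff, sum_sub_Pmean_mul_sub_Pmean]
  field_simp
  linear_combination hprod
end
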